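/- A subset A of a generalized topological space is sβ_λ-closed (i.e., A = H ∩ Q with H a s∧_λ-set and Q sλ-closed) if and only if A = sA_λ^∧ ∩ scl_λ(A). -/
import Mathlib


open Set

variable {X : Type*}

def IsGT (μ : Set (Set X)) : Prop :=
  ∅ ∈ μ ∧ ∀ S : Set (Set X), S ⊆ μ → ⋃₀ S ∈ μ

def muInt (μ : Set (Set X)) (A : Set X) : Set X := ⋃₀ {U | U ∈ μ ∧ U ⊆ A}

def muCl (μ : Set (Set X)) (A : Set X) : Set X := ⋂₀ {F | Fᶜ ∈ μ ∧ A ⊆ F}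

def sOpen (μ : Set (Set X)) (A : Set X) : Prop := A ⊆ muCl μ (muInt μ A)

def sClosed (μ : Set (Set X)) (A : Set X) : Prop := sOpen μ Aᶜ

def sInt (μ : Set (Set X)) (A : Set X) : Set X := ⋃₀ {U | sOpen μ U ∧ U ⊆ A}

def sCl (μ : Set (Set X)) (A : Set X) : Set X := ⋂₀ {F | sClosed μ F ∧ A ⊆ F}

def sWedge (μ : Set (Set X)) (A : Set X) : Set X := ⋂₀ {U | sOpen μ U ∧ A ⊆ U}

def sVee (μ : Set (Set X)) (A : Set X) : Set X := ⋃₀ {F | sClosed μ F ∧ F ⊆ A}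

def sLambdaClosed (μ : Set (Set X)) (A : Set X) : Prop :=
  ∃ K P : Set X, K = sWedge μ K ∧ sClosed μ P ∧ A = K ∩ P

def sLambdaOpen (μ : Set (Set X)) (A : Set X) : Prop := sLambdaClosed μ Aᶜ

def sclL (μ : Set (Set X)) (A : Set X) : Set X := ⋂₀ {F | sLambdaClosed μ F ∧ A ⊆ F}

def sIntL (μ : Set (Set X)) (A : Set X) : Set X := ⋃₀ {U | sLambdaOpen μ U ∧ U ⊆ A}

def sWedgeL (μ : Set (Set X)) (A : Set X) : Set X := ⋂₀ {U | sLambdaOpen μ U ∧ A ⊆ U}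

def sVeeL (μ : Set (Set X)) (A : Set X) : Set X := ⋃₀ {F | sLambdaClosed μ F ∧ F ⊆ A}

def sgClosed (μ : Set (Set X)) (A : Set X) : Prop :=
  ∀ U : Set X, sLambdaOpen μ U → A ⊆ U → sclL μ A ⊆ U

def sgOpen (μ : Set (Set X)) (A : Set X) : Prop := sgClosed μ Aᶜ

def sBetaClosed (μ : Set (Set X)) (A : Set X) : Prop :=
  ∃ H Q : Set X, H = sWedgeL μ H ∧ sLambdaClosed μ Q ∧ A = H ∩ Q

def sT0 (μ : Set (Set X)) : Prop :=
  ∀ x y : X, x ≠ y → ∃ U : Set X, sLambdaOpen μ U ∧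
    ((x ∈ U ∧ y ∉ U) ∨ (y ∈ U ∧ x ∉ U))

def sT1 (μ : Set (Set X)) : Prop :=
  ∀ x y : X, x ≠ y → ∃ U V : Set X, sLambdaOpen μ U ∧ sLambdaOpen μ V ∧
    x ∈ U ∧ y ∉ U ∧ y ∈ V ∧ x ∉ V

lemma muInt_mono (μ : Set (Set X)) {A B : Set X} (h : A ⊆ B) : muInt μ A ⊆ muInt μ B := by
  rintro x ⟨U, ⟨hU, hUA⟩, hx⟩
  exact ⟨U, ⟨hU, hUA.trans h⟩, hx⟩

lemma muCl_mono (μ : Set (Set X)) {A B : Set X} (h : A ⊆ B) : muCl μ A ⊆ muCl μ B := by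
  intro x hx F hF
  exact hx F ⟨hF.1, h.trans hF.2⟩

lemma sOpen_sUnion (μ : Set (Set X)) {S : Set (Set X)} (h : ∀ U ∈ S, sOpen μ U) :
    sOpen μ (⋃₀ S) := by
  rintro x ⟨U, hUS, hxU⟩
  have h1 : x ∈ muCl μ (muInt μ U) := h U hUS hxU
  exact muCl_mono μ (muInt_mono μ (subset_sUnion_of_mem hUS)) h1

lemma sClosed_sInter (μ : Set (Set X)) {S : Set (Set X)} (h : ∀ F ∈ S, sClosed μ F) :
    sClosed μ (⋂₀ S) := by
  have : (⋂₀ S)ᶜ = ⋃₀ (compl '' S) := by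
    ext x; simp [mem_sInter]
  unfold sClosed
  rw [this]
  apply sOpen_sUnion
  rintro U ⟨F, hF, rfl⟩
  exact h F hF

lemma subset_sWedge (μ : Set (Set X)) (A : Set X) : A ⊆ sWedge μ A := by
  intro x hx U hU; exact hU.2 hx

lemma sWedge_mono (μ : Set (Set X)) {A B : Set X} (h : A ⊆ B) :
    sWedge μ A ⊆ sWedge μ B := by
  intro x hx U hU
  exact hx U ⟨hU.1, h.trans hU.2⟩

lemma subset_sWedgeL (μ : Set (Set X)) (A : Set X) : A ⊆ sWedgeL μ A := by
  intro x hx U hU; exact hU.2 hx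

lemma sWedgeL_mono (μ : Set (Set X)) {A B : Set X} (h : A ⊆ B) :
    sWedgeL μ A ⊆ sWedgeL μ B := by
  intro x hx U hU
  exact hx U ⟨hU.1, h.trans hU.2⟩

lemma sWedgeL_idem (μ : Set (Set X)) (A : Set X) :
    sWedgeL μ A = sWedgeL μ (sWedgeL μ A) := by
  apply le_antisymm
  · exact subset_sWedgeL μ _
  · intro x hx U hU
    exact hx U ⟨hU.1, fun y hy => hy U hU⟩

lemma subset_sclL (μ : Set (Set X)) (A : Set X) : A ⊆ sclL μ A := by
  intro x hx F hF; exact hF.2 hx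

lemma sclL_subset (μ : Set (Set X)) {A F : Set X} (h1 : sLambdaClosed μ F) (h2 : A ⊆ F) :
    sclL μ A ⊆ F := fun x hx => hx F ⟨h1, h2⟩

lemma sLambdaClosed_sInter (μ : Set (Set X)) {S : Set (Set X)}
    (h : ∀ F ∈ S, sLambdaClosed μ F) : sLambdaClosed μ (⋂₀ S) := by
  classical
  set KS : Set (Set X) := {K | K = sWedge μ K ∧ ∃ P, sClosed μ P ∧ K ∩ P ∈ S} with hKS
  set PS : Set (Set X) := {P | sClosed μ P ∧ ∃ K, K = sWedge μ K ∧ K ∩ P ∈ S} with hPS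
  refine ⟨⋂₀ KS, ⋂₀ PS, ?_, ?_, ?_⟩
  · apply le_antisymm
    · intro x hx U hU; exact hU.2 hx
    · intro x hx K hK
      have h1 : sWedge μ (⋂₀ KS) ⊆ sWedge μ K :=
        sWedge_mono μ (sInter_subset_of_mem hK)
      rw [← hK.1] at h1
      exact h1 hx
  · exact sClosed_sInter μ (fun P hP => hP.1)
  · apply le_antisymm
    · intro x hx
      constructor
      · rintro K ⟨hK1, P, hP, hKPS⟩
        exact (hx _ hKPS).1
      · rintro P ⟨hP1, K, hK, hKPS⟩
        exact (hx _ hKPS).2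
    · intro x hx F hFS
      obtain ⟨K, P, hK, hP, rfl⟩ := h F hFS
      exact ⟨hx.1 K ⟨hK, P, hP, hFS⟩, hx.2 P ⟨hP, K, hK, hFS⟩⟩

lemma sLambdaClosed_sclL (μ : Set (Set X)) (A : Set X) : sLambdaClosed μ (sclL μ A) :=
  sLambdaClosed_sInter μ (fun _ hF => hF.1)

theorem stmt14 (μ : Set (Set X)) (hμ : IsGT μ) (A : Set X) :
    sBetaClosed μ A ↔ A = sWedgeL μ A ∩ sclL μ A := by
  constructor
  · rintro ⟨H, Q, hH, hQ, rfl⟩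
    apply le_antisymm
    · exact subset_inter (subset_sWedgeL μ _) (subset_sclL μ _)
    · intro x hx
      refine ⟨?_, ?_⟩
      · have h1 : sWedgeL μ (H ∩ Q) ⊆ sWedgeL μ H := sWedgeL_mono μ inter_subset_left
        rw [← hH] at h1
        exact h1 hx.1
      · exact sclL_subset μ hQ inter_subset_right hx.2
  · intro hA
    exact ⟨sWedgeL μ A, sclL μ A, sWedgeL_idem μ A, sLambdaClosed_sclL μ A, hA⟩
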